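/- arXiv:math/0107138 — 3 statements merged into one kernel-verified Lean document; each statement's English description precedes it below -/
import Mathlib

section
/- For every k ∈ {4,3,2,1} the matrices Rₖ and Qₖ satisfy the braid relation Rₖ·Qₖ·Rₖ = Qₖ·Rₖ·Qₖ; hence σ₁ ↦ Rₖ, σ₂ ↦ Qₖ defines a representation of the braid group B₃ on three strands over K. -/
set_option maxHeartbeats 4000000
set_option synthInstance.maxHeartbeats 1000000


noncomputable section

/-- The variable `W` of the field `K = ℚ(W)` of rational functions. -/
def W : RatFunc ℚ := RatFunc.X

/-- The blocks `Rₖ` of the image of the elementary braid `σ₁` of `B₃` under the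
invariant `Z_spin7` obtained by composing the universal Vassiliev–Kontsevich invariant
with the weight system of the spinor representation of `so₇`. -/
def R4 : Matrix (Fin 4) (Fin 4) (RatFunc ℚ) :=
  !![W ^ 21, -W * (1 - W ^ 4 + W ^ 8), -W ^ 9 * (1 - W ^ 4 + W ^ 8), W ^ (-3 : ℤ);
     0, -W, -(1 - W ^ 4) * W ^ 9, W ^ (-3 : ℤ);
     0, 0, -W ^ 9, W ^ (-3 : ℤ);
     0, 0, 0, W ^ (-3 : ℤ)]

def R3 : Matrix (Fin 3) (Fin 3) (RatFunc ℚ) :=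
  !![-W, -W ^ (-11 : ℤ) * (W ^ 20 - 1), -W ^ 9;
     0, -W ^ 9, -W ^ 9;
     0, 0, W ^ (-3 : ℤ)]

def R2 : Matrix (Fin 2) (Fin 2) (RatFunc ℚ) :=
  !![-W, -W; 0, W ^ (-3 : ℤ)]

def R1 : Matrix (Fin 1) (Fin 1) (RatFunc ℚ) :=
  !![W ^ (-3 : ℤ)]

/-- The blocks `Qₖ` of the image of the elementary braid `σ₂` of `B₃` under `Z_spin7`. -/
def Q4 : Matrix (Fin 4) (Fin 4) (RatFunc ℚ) :=
  !![W ^ (-3 : ℤ), 0, 0, 0;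
     W ^ 9, -W ^ 9, 0, 0;
     W ^ (-3 : ℤ), W ^ (-3 : ℤ) * (W ^ 4 - 1), -W, 0;
     W ^ 9, -W ^ 9 * (W ^ 8 - W ^ 4 + 1), -W ^ 13 * (W ^ 8 - W ^ 4 + 1), W ^ 21]

def Q3 : Matrix (Fin 3) (Fin 3) (RatFunc ℚ) :=
  !![W ^ (-3 : ℤ), 0, 0;
     W ^ 9, -W ^ 9, 0;
     -W ^ 9, W ^ (-11 : ℤ) * (W ^ 20 - 1), -W]

def Q2 : Matrix (Fin 2) (Fin 2) (RatFunc ℚ) :=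
  !![W ^ (-3 : ℤ), 0; -W ^ (-3 : ℤ), -W]

def Q1 : Matrix (Fin 1) (Fin 1) (RatFunc ℚ) :=
  !![W ^ (-3 : ℤ)]

section Aux

private lemma braid_of_smul {n : ℕ} {c : RatFunc ℚ} (hc : c ≠ 0)
    (A B : Matrix (Fin n) (Fin n) (RatFunc ℚ))
    (h : (c • A) * ((c • B) * (c • A)) = (c • B) * ((c • A) * (c • B))) :
    A * B * A = B * A * B := by
  have e : ∀ X Y Z : Matrix (Fin n) (Fin n) (RatFunc ℚ),
      (c • X) * ((c • Y) * (c • Z)) = (c ^ 3) • (X * (Y * Z)) := by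
    intro X Y Z
    simp only [Matrix.smul_mul, Matrix.mul_smul, smul_smul]
    congr 1
    ring
  rw [e, e] at h
  ext i j
  have h2 := congrFun (congrFun h i) j
  simp only [Matrix.smul_apply, smul_eq_mul] at h2
  have h3 := mul_left_cancel₀ (pow_ne_zero 3 hc) h2
  calc (A * B * A) i j = (A * (B * A)) i j := by rw [mul_assoc]
    _ = (B * (A * B)) i j := h3
    _ = (B * A * B) i j := by rw [mul_assoc]

private def R4' : Matrix (Fin 4) (Fin 4) (RatFunc ℚ) :=
  !![W ^ 24, -W ^ 4 * (1 - W ^ 4 + W ^ 8), -W ^ 12 * (1 - W ^ 4 + W ^ 8), 1;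
     0, -W ^ 4, -(1 - W ^ 4) * W ^ 12, 1;
     0, 0, -W ^ 12, 1;
     0, 0, 0, 1]

private def Q4' : Matrix (Fin 4) (Fin 4) (RatFunc ℚ) :=
  !![1, 0, 0, 0;
     W ^ 12, -W ^ 12, 0, 0;
     1, W ^ 4 - 1, -W ^ 4, 0;
     W ^ 12, -W ^ 12 * (W ^ 8 - W ^ 4 + 1), -W ^ 16 * (W ^ 8 - W ^ 4 + 1), W ^ 24]

private def R3' : Matrix (Fin 3) (Fin 3) (RatFunc ℚ) :=
  !![-W ^ 12, -(W ^ 20 - 1), -W ^ 20;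
     0, -W ^ 20, -W ^ 20;
     0, 0, W ^ 8]

private def Q3' : Matrix (Fin 3) (Fin 3) (RatFunc ℚ) :=
  !![W ^ 8, 0, 0;
     W ^ 20, -W ^ 20, 0;
     -W ^ 20, W ^ 20 - 1, -W ^ 12]

private def R2' : Matrix (Fin 2) (Fin 2) (RatFunc ℚ) :=
  !![-W ^ 4, -W ^ 4; 0, 1]

private def Q2' : Matrix (Fin 2) (Fin 2) (RatFunc ℚ) :=
  !![1, 0; -1, -W ^ 4]

private lemma hWne : W ≠ 0 := RatFunc.X_ne_zero

private lemma zc3 : (W ^ 3) * W ^ (-3 : ℤ) = 1 := by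
  rw [← zpow_natCast W 3, ← zpow_add₀ hWne]
  norm_num

private lemma zc11 : (W ^ 11) * W ^ (-11 : ℤ) = 1 := by
  rw [← zpow_natCast W 11, ← zpow_add₀ hWne]
  norm_num

private lemma zc11_3 : (W ^ 11) * W ^ (-3 : ℤ) = W ^ 8 := by
  rw [← zpow_natCast W 11, ← zpow_add₀ hWne]
  norm_num

private lemma zc3' : (W ^ 3) * (W ^ 3 : RatFunc ℚ)⁻¹ = 1 :=
  mul_inv_cancel₀ (pow_ne_zero _ hWne)

private lemma zc11' : (W ^ 11) * (W ^ 11 : RatFunc ℚ)⁻¹ = 1 :=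
  mul_inv_cancel₀ (pow_ne_zero _ hWne)

private lemma hR4 : (W ^ 3) • R4 = R4' := by
  have hW : W ≠ 0 := hWne
  ext i j
  fin_cases i <;> fin_cases j <;>
    simp [R4, R4', Matrix.smul_apply, smul_eq_mul, zc3, zc3', Matrix.vecHead, Matrix.vecTail, Function.comp, zpow_ofNat] <;> (try field_simp) <;> try ring

private lemma hQ4 : (W ^ 3) • Q4 = Q4' := by
  have hW : W ≠ 0 := hWne
  ext i j
  fin_cases i <;> fin_cases j <;>
    simp [Q4, Q4', Matrix.smul_apply, smul_eq_mul, zc3, zc3', Matrix.vecHead, Matrix.vecTail, Function.comp, zpow_ofNat, mul_assoc,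
      ← mul_assoc (W ^ 3) (W ^ (-3 : ℤ))] <;> (try field_simp) <;> try ring

private lemma hR3 : (W ^ 11) • R3 = R3' := by
  have hW : W ≠ 0 := hWne
  ext i j
  fin_cases i <;> fin_cases j <;>
    simp [R3, R3', Matrix.smul_apply, smul_eq_mul, zc11, zc11', zc11_3, Matrix.vecHead, Matrix.vecTail, Function.comp, zpow_ofNat,
      ← mul_assoc (W ^ 11) (W ^ (-11 : ℤ)), ← mul_assoc (W ^ 11) (W ^ (-3 : ℤ))] <;> (try field_simp) <;> try ring

private lemma hQ3 : (W ^ 11) • Q3 = Q3' := by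
  have hW : W ≠ 0 := hWne
  ext i j
  fin_cases i <;> fin_cases j <;>
    simp [Q3, Q3', Matrix.smul_apply, smul_eq_mul, zc11, zc11', zc11_3, Matrix.vecHead, Matrix.vecTail, Function.comp, zpow_ofNat,
      ← mul_assoc (W ^ 11) (W ^ (-11 : ℤ)), ← mul_assoc (W ^ 11) (W ^ (-3 : ℤ))] <;> (try field_simp) <;> try ring

private lemma hR2 : (W ^ 3) • R2 = R2' := by
  have hW : W ≠ 0 := hWne
  ext i j
  fin_cases i <;> fin_cases j <;>
    simp [R2, R2', Matrix.smul_apply, smul_eq_mul, zc3, zc3', Matrix.vecHead, Matrix.vecTail, Function.comp, zpow_ofNat] <;> (try field_simp) <;> try ring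

private lemma hQ2 : (W ^ 3) • Q2 = Q2' := by
  have hW : W ≠ 0 := hWne
  ext i j
  fin_cases i <;> fin_cases j <;>
    simp [Q2, Q2', Matrix.smul_apply, smul_eq_mul, zc3, zc3', Matrix.vecHead, Matrix.vecTail, Function.comp, zpow_ofNat,
      ← mul_assoc (W ^ 3) (W ^ (-3 : ℤ))] <;> (try field_simp) <;> try ring

end Aux

/-- For every `k ∈ {4,3,2,1}` the matrices `Rₖ` and `Qₖ` satisfy the braid relation
`Rₖ·Qₖ·Rₖ = Qₖ·Rₖ·Qₖ`; hence `σ₁ ↦ Rₖ`, `σ₂ ↦ Qₖ` defines a representation of the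
braid group `B₃` on three strands over `K = ℚ(W)`. -/
theorem Zspin7_braid_relation :
    (R4 * Q4 * R4 = Q4 * R4 * Q4) ∧ (R3 * Q3 * R3 = Q3 * R3 * Q3) ∧
    (R2 * Q2 * R2 = Q2 * R2 * Q2) ∧ (R1 * Q1 * R1 = Q1 * R1 * Q1) := by
  refine ⟨?_, ?_, ?_, ?_⟩
  · refine braid_of_smul (pow_ne_zero 3 hWne) _ _ ?_
    rw [hR4, hQ4]
    ext i j
    fin_cases i <;> fin_cases j <;>
      · simp [R4', Q4', Matrix.mul_apply, Fin.sum_univ_succ]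
        try ring
        try exact Or.inr trivial
  · refine braid_of_smul (pow_ne_zero 11 hWne) _ _ ?_
    rw [hR3, hQ3]
    ext i j
    fin_cases i <;> fin_cases j <;>
      · simp [R3', Q3', Matrix.mul_apply, Fin.sum_univ_succ]
        try ring
        try exact Or.inr trivial
  · refine braid_of_smul (pow_ne_zero 3 hWne) _ _ ?_
    rw [hR2, hQ2]
    ext i j
    fin_cases i <;> fin_cases j <;>
      · simp [R2', Q2', Matrix.mul_apply, Fin.sum_univ_succ]
        try ring
        try exact Or.inr trivial
  · rw [show R1 = Q1 from rfl]

end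
end

section
/- The matrix A₄ is a common left and right W^21-eigen-element of R₄: one has R₄·A₄ = W^21·A₄ and A₄·R₄ = W^21·A₄. (Thus A₄ is Δ times the projector onto the eigenspace of R₄ for the eigenvalue W^21.) -/
noncomputable section

/-- `Δ = W^{-18}(W^{20}+1)(W^{12}+1)(W^{4}+1)`, the value of `Z_spin7` on the unknot. -/
def Δ : RatFunc ℚ := W ^ (-18 : ℤ) * (W ^ 20 + 1) * (W ^ 12 + 1) * (W ^ 4 + 1)

/-- `A₄`: the 4×4 block of the image under `Z_spin7` of the cup-cap tangle `A_{1,2}`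
on strands 1,2. -/
def A4 : Matrix (Fin 4) (Fin 4) (RatFunc ℚ) :=
  !![Δ, -W ^ (-18 : ℤ) * (W ^ 12 + 1) ^ 2, -W ^ (-14 : ℤ) * (W ^ 12 + 1) * (W ^ 16 + 1),
       W ^ (-6 : ℤ);
     0, 0, 0, 0;
     0, 0, 0, 0;
     0, 0, 0, 0]

set_option synthInstance.maxHeartbeats 400000 in
set_option maxHeartbeats 40000000 in
/-- `A₄` is a common left and right `W^21`-eigen-element of `R₄`:
`R₄·A₄ = W^21·A₄` and `A₄·R₄ = W^21·A₄`. -/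
theorem Zspin7_cupcap_eigen :
    R4 * A4 = W ^ 21 • A4 ∧ A4 * R4 = W ^ 21 • A4 := by
  have hW : W ≠ 0 := RatFunc.X_ne_zero
  constructor <;>
  · ext i j
    fin_cases i <;> fin_cases j <;>
      simp [R4, A4, Δ, Matrix.mul_apply, Fin.sum_univ_four, zpow_neg,
        Matrix.vecHead, Matrix.vecTail] <;>
      first
        | ring1
        | (field_simp; ring1)
        | (ring_nf; simp only [← zpow_natCast W, ← zpow_neg, ← zpow_add₀ hW]; norm_num; try ring_nf)

end
end

section
/- The matrices satisfy the tangle identity A₄·R₄·Q₄·A₄ = A₄, the image under Z_spin7 of the identity A_{1,2}·R_{1,2}·R_{2,3}·A_{1,2} = A_{1,2} in the monoid of q-tangles; this identity determines the normalization Δ = W^-18(W^20+1)(W^12+1)(W^4+1). -/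
noncomputable section

/-- The tangle identity `A₄·R₄·Q₄·A₄ = A₄`, the image under `Z_spin7` of the identity
`A_{1,2}·R_{1,2}·R_{2,3}·A_{1,2} = A_{1,2}` in the monoid of q-tangles; this identity
determines the normalization `Δ = W^{-18}(W^{20}+1)(W^{12}+1)(W^{4}+1)`. -/
theorem Zspin7_tangle_identity :
    A4 * R4 * Q4 * A4 = A4 := by
  have hW : W ≠ 0 := RatFunc.X_ne_zero
  have hArow : ∀ i : Fin 4, i ≠ 0 → ∀ k : Fin 4, A4 i k = 0 := by
    intro i hi k
    fin_cases i
    · exact absurd rfl hi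
    all_goals fin_cases k <;> rfl
  have hzero : ∀ (M : Matrix (Fin 4) (Fin 4) (RatFunc ℚ)) (i : Fin 4), i ≠ 0 →
      ∀ j, (A4 * M) i j = 0 := by
    intro M i hi j
    rw [Matrix.mul_apply]
    apply Finset.sum_eq_zero
    intro k _
    rw [hArow i hi k, zero_mul]
  have key : (A4 * R4 * Q4) 0 0 = 1 := by
    rw [Matrix.mul_apply, Fin.sum_univ_four]
    simp only [Matrix.mul_apply, Fin.sum_univ_four]
    simp only [A4, R4, Q4, Δ, Matrix.cons_val', Matrix.cons_val_zero, Matrix.cons_val_one,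
      Matrix.head_cons, Matrix.empty_val', Matrix.cons_val_fin_one, Matrix.cons_val_two,
      Matrix.tail_cons, Matrix.cons_val_three, Matrix.head_fin_const, Matrix.cons_val_succ,
      Matrix.of_apply]
    simp only [zpow_neg, zpow_ofNat, ← inv_pow]
    have hWV : W * W⁻¹ = 1 := mul_inv_cancel₀ hW
    linear_combination ((1 : RatFunc ℚ) * W ^ 0 * W⁻¹ ^ 0 + (1 : RatFunc ℚ) * W ^ 1 * W⁻¹ ^ 1 + (1 : RatFunc ℚ) * W ^ 2 * W⁻¹ ^ 2 + (1 : RatFunc ℚ) * W ^ 3 * W⁻¹ ^ 3 + (1 : RatFunc ℚ) * W ^ 4 * W⁻¹ ^ 4 + (1 : RatFunc ℚ) * W ^ 5 * W⁻¹ ^ 5 + (1 : RatFunc ℚ) * W ^ 6 * W⁻¹ ^ 6 + (1 : RatFunc ℚ) * W ^ 7 * W⁻¹ ^ 7 + (1 : RatFunc ℚ) * W ^ 8 * W⁻¹ ^ 8 + (1 : RatFunc ℚ) * W ^ 30 * W⁻¹ ^ 18 + (1 : RatFunc ℚ) * W ^ 31 * W⁻¹ ^ 19 + (1 : RatFunc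 ℚ) * W ^ 32 * W⁻¹ ^ 20 + (2 : RatFunc ℚ) * W ^ 42 * W⁻¹ ^ 18 + (2 : RatFunc ℚ) * W ^ 43 * W⁻¹ ^ 19 + (2 : RatFunc ℚ) * W ^ 44 * W⁻¹ ^ 20 + (1 : RatFunc ℚ) * W ^ 54 * W⁻¹ ^ 18 + (1 : RatFunc ℚ) * W ^ 55 * W⁻¹ ^ 19 + (1 : RatFunc ℚ) * W ^ 56 * W⁻¹ ^ 20) * hWV
  ext i j
  rw [Matrix.mul_apply, Fin.sum_univ_four]
  rw [hArow 1 (by decide) j, hArow 2 (by decide) j, hArow 3 (by decide) j]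
  simp only [mul_zero, add_zero]
  by_cases hi : i = 0
  · subst hi
    rw [key, one_mul]
  · rw [mul_assoc A4 R4 Q4, hzero _ i hi 0, zero_mul]
    exact (hArow i hi j).symm

end
end
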